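/- arXiv:1607.01027 — 5 statements merged into one kernel-verified Lean document; each statement's English description precedes it below -/
import Mathlib

section
/- Let F : ℝ^d → ℝ be convex with nonempty optimal set K_* (the set of minimizers) and optimal value F_*. For ε > 0, let S_ε = {w : F(w) ≤ F_* + ε} be the ε-sublevel set. For any w, let w_ε† be the projection of w onto S_ε (the closest point of S_ε to w). Then ‖w - w_ε†‖ ≤ (dist(w_ε†, K_*)/ε) · (F(w) - F(w_ε†)). -/
open RealInnerProductSpace

theorem stmt_0 (d : ℕ) (F : EuclideanSpace ℝ (Fin d) → ℝ)
    (hF : ConvexOn ℝ Set.univ F)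
    (Kstar : Set (EuclideanSpace ℝ (Fin d)))
    (hKstar : Kstar = {w | ∀ v, F w ≤ F v}) (hne : Kstar.Nonempty)
    (Fstar : ℝ) (hFstar : ∀ w ∈ Kstar, F w = Fstar)
    (ε : ℝ) (hε : 0 < ε)
    (Sε : Set (EuclideanSpace ℝ (Fin d))) (hSε : Sε = {w | F w ≤ Fstar + ε})
    (w wd : EuclideanSpace ℝ (Fin d))
    (hwd : wd ∈ Sε) (hproj : ∀ v ∈ Sε, ‖wd - w‖ ≤ ‖v - w‖) :
    ‖w - wd‖ ≤ (Metric.infDist wd Kstar / ε) * (F w - F wd) := by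
  obtain ⟨u0, hu0⟩ := hne
  have hmin : ∀ u ∈ Kstar, ∀ v, F u ≤ F v := by
    intro u hu
    rw [hKstar] at hu
    exact hu
  have hFstar_le : ∀ v, Fstar ≤ F v := by
    intro v
    rw [← hFstar u0 hu0]
    exact hmin u0 hu0 v
  have hwdS : F wd ≤ Fstar + ε := by rw [hSε] at hwd; exact hwd
  by_cases hw : F w ≤ Fstar + ε
  · have h0 : ‖wd - w‖ ≤ 0 := by
      have := hproj w (by rw [hSε]; exact hw)
      simpa using this
    have heq : wd = w := by
      have := norm_sub_eq_zero_iff.mp (le_antisymm h0 (norm_nonneg _))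
      exact this
    rw [heq]
    simp
  · push_neg at hw
    set D : ℝ := F w - Fstar with hD
    have hDε : ε < D := by simp [hD]; linarith
    have hDpos : 0 < D := lt_trans hε hDε
    set lam : ℝ := ε / D with hlam
    have hlam0 : 0 < lam := div_pos hε hDpos
    have hlam1 : lam < 1 := (div_lt_one hDpos).mpr hDε
    -- key inequality for each u in Kstar
    have key : ∀ u ∈ Kstar, ε * ‖w - wd‖ ≤ (F w - F wd) * ‖wd - u‖ := by
      intro u hu
      set z := lam • w + (1 - lam) • u with hz
      have hFz : F z ≤ lam * F w + (1 - lam) * F u :=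
        hF.2 (Set.mem_univ w) (Set.mem_univ u) (le_of_lt hlam0) (by linarith) (by ring)
      have hFu : F u = Fstar := hFstar u hu
      have hzS : z ∈ Sε := by
        rw [hSε]
        have : lam * F w + (1 - lam) * Fstar = Fstar + lam * D := by
          simp [hD]; ring
        have hlamD : lam * D = ε := div_mul_cancel₀ ε (ne_of_gt hDpos)
        show F z ≤ Fstar + ε
        rw [hFu] at hFz
        linarith [hFz, this.symm ▸ hFz]
      have h1 : ‖wd - w‖ ≤ ‖z - w‖ := hproj z hzS
      have h2 : ‖z - w‖ = (1 - lam) * ‖u - w‖ := by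
        have : z - w = (1 - lam) • (u - w) := by
          rw [hz]
          module
        rw [this, norm_smul, Real.norm_eq_abs, abs_of_nonneg (by linarith)]
      have h3 : ‖u - w‖ ≤ ‖w - wd‖ + ‖wd - u‖ := by
        have := norm_sub_le_norm_sub_add_norm_sub u wd w
        have e1 : ‖u - w‖ = ‖w - u‖ := norm_sub_rev u w
        have e2 : ‖wd - u‖ = ‖u - wd‖ := norm_sub_rev wd u
        calc ‖u - w‖ = ‖w - u‖ := e1
          _ ≤ ‖w - wd‖ + ‖wd - u‖ := by
              have := norm_sub_le_norm_sub_add_norm_sub w wd u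
              exact this
      have h4 : ‖wd - w‖ = ‖w - wd‖ := norm_sub_rev wd w
      have h5 : lam * ‖w - wd‖ ≤ (1 - lam) * ‖wd - u‖ := by nlinarith [norm_nonneg (wd - u)]
      have h6 : ε * ‖w - wd‖ ≤ (D - ε) * ‖wd - u‖ := by
        have hlamD : lam * D = ε := div_mul_cancel₀ ε (ne_of_gt hDpos)
        nlinarith [norm_nonneg (wd - u), norm_nonneg (w - wd)]
      have h7 : D - ε ≤ F w - F wd := by simp [hD]; linarith
      nlinarith [norm_nonneg (wd - u)]
    have hc : 0 < F w - F wd := by linarith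
    have hinf : ε * ‖w - wd‖ / (F w - F wd) ≤ Metric.infDist wd Kstar := by
      rw [← not_lt]
      intro hlt
      obtain ⟨u, hu, hd⟩ := (Metric.infDist_lt_iff ⟨u0, hu0⟩).mp hlt
      rw [dist_eq_norm] at hd
      have hk := key u hu
      have hb : ε * ‖w - wd‖ / (F w - F wd) * (F w - F wd) = ε * ‖w - wd‖ :=
        div_mul_cancel₀ _ (ne_of_gt hc)
      nlinarith
    calc ‖w - wd‖ = (ε * ‖w - wd‖ / (F w - F wd)) * ((F w - F wd) / ε) := by
          field_simp
      _ ≤ Metric.infDist wd Kstar * ((F w - F wd) / ε) := by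
          apply mul_le_mul_of_nonneg_right hinf
          positivity
      _ = Metric.infDist wd Kstar / ε * (F w - F wd) := by ring
end

section
/- Let F : ℝ^d → ℝ be convex with nonempty compact optimal set Ω_* and optimal value F_*. For ε > 0 define B_ε = max over w in the level set {w : F(w) = F_* + ε} of dist(w, Ω_*). Then the function ε ↦ B_ε/ε is monotonically non-increasing: if 0 < ε < ε', then B_{ε'}/ε' ≤ B_ε/ε. -/
/-!
Take a point `w` of the `ε'`-level set at maximal distance `B_ε'` from `Ω_*` and its nearest
point `p ∈ Ω_*`. By convexity `F ≤ F_* + ε` at the point of the segment `[p, w]` at parameter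
`ε / ε'`, so by the intermediate value theorem the `ε`-level set meets the segment at some
parameter `s ≥ ε / ε'`. Since `p` is nearest to `w`, that point is at distance at least
`s B_ε'` from `Ω_*`, whence `B_ε ≥ (ε / ε') B_ε'`.
-/

open Set Metric AffineMap

theorem ConvexOn.exists_lineMap_eq_of_lt_of_le {E : Type*} [AddCommGroup E] [Module ℝ E]
    [TopologicalSpace E] [IsTopologicalAddGroup E] [ContinuousSMul ℝ E] {F : E → ℝ}
    (hF : ConvexOn ℝ univ F) (hFc : Continuous F) {p w : E} {c : ℝ}
    (hpc : F p < c) (hcw : c ≤ F w) :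
    ∃ s ∈ Icc ((c - F p) / (F w - F p)) 1, F (lineMap p w s) = c := by
  set t := (c - F p) / (F w - F p)
  have hgap : 0 < F w - F p := by linarith
  have ht : t ∈ Icc (0 : ℝ) 1 :=
    ⟨div_nonneg (by linarith) hgap.le, (div_le_one hgap).mpr (by linarith)⟩
  have hFt : F (lineMap p w t) ≤ c :=
    calc F (lineMap p w t) ≤ (1 - t) * F p + t * F w := by
          rw [lineMap_apply_module]
          exact hF.2 (mem_univ p) (mem_univ w) (by linarith [ht.2]) ht.1 (by ring)
      _ = c := by simp only [t]; field_simp; ring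
  have hF1 : c ≤ F (lineMap p w (1 : ℝ)) := by rwa [lineMap_apply_one]
  have hpath : Continuous fun s : ℝ => F (lineMap p w s) := hFc.comp lineMap_continuous
  exact intermediate_value_Icc ht.2 hpath.continuousOn ⟨hFt, hF1⟩

theorem mul_infDist_le_infDist_lineMap {V P : Type*} [SeminormedAddCommGroup V]
    [NormedSpace ℝ V] [PseudoMetricSpace P] [NormedAddTorsor V P] {Ω : Set P} {p w : P}
    (hp : infDist w Ω = dist w p) {s : ℝ} (hs : s ≤ 1) :
    s * infDist w Ω ≤ infDist (lineMap p w s) Ω := by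
  have h := infDist_le_infDist_add_dist (x := w) (y := lineMap p w s) (s := Ω)
  rw [dist_right_lineMap, Real.norm_eq_abs, abs_of_nonneg (by linarith), dist_comm p, ← hp] at h
  linarith

theorem stmt_1_general (d : ℕ) (F : EuclideanSpace ℝ (Fin d) → ℝ)
    (hF : ConvexOn ℝ Set.univ F)
    (Ωstar : Set (EuclideanSpace ℝ (Fin d)))
    (hne : Ωstar.Nonempty)
    (hcomp : IsCompact Ωstar)
    (Fstar : ℝ) (hFstar : ∀ w ∈ Ωstar, F w = Fstar)
    (ε ε' Bε Bε' : ℝ) (hε : 0 < ε) (hεε' : ε < ε')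
    (hBε : IsGreatest ((fun w => Metric.infDist w Ωstar) '' {w | F w = Fstar + ε}) Bε)
    (hBε' : IsGreatest ((fun w => Metric.infDist w Ωstar) '' {w | F w = Fstar + ε'}) Bε') :
    Bε' / ε' ≤ Bε / ε := by
  obtain ⟨w, hw : F w = Fstar + ε', rfl⟩ := hBε'.1
  obtain ⟨p, hpΩ, hp⟩ := hcomp.exists_infDist_eq_dist hne w
  have hFc : Continuous F := continuousOn_univ.mp (hF.continuousOn isOpen_univ)
  obtain ⟨s, ⟨hs₀, hs₁⟩, hFs⟩ := hF.exists_lineMap_eq_of_lt_of_le hFc (c := Fstar + ε)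
    (by rw [hFstar p hpΩ]; linarith) (by rw [hw]; linarith)
  rw [hFstar p hpΩ, hw, add_sub_cancel_left, add_sub_cancel_left] at hs₀
  have hε' : 0 < ε' := hε.trans hεε'
  calc infDist w Ωstar / ε' = ε / ε' * infDist w Ωstar / ε := by field_simp
    _ ≤ s * infDist w Ωstar / ε := by gcongr; exact infDist_nonneg
    _ ≤ infDist (lineMap p w s) Ωstar / ε := by
      gcongr; exact mul_infDist_le_infDist_lineMap hp hs₁
    _ ≤ Bε / ε := by gcongr; exact hBε.2 ⟨_, hFs, rfl⟩

theorem stmt_1 (d : ℕ) (F : EuclideanSpace ℝ (Fin d) → ℝ)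
    (hF : ConvexOn ℝ Set.univ F)
    (Ωstar : Set (EuclideanSpace ℝ (Fin d)))
    (hΩstar : Ωstar = {w | ∀ v, F w ≤ F v}) (hne : Ωstar.Nonempty)
    (hconv : Convex ℝ Ωstar) (hcomp : IsCompact Ωstar)
    (Fstar : ℝ) (hFstar : ∀ w ∈ Ωstar, F w = Fstar)
    (ε ε' Bε Bε' : ℝ) (hε : 0 < ε) (hεε' : ε < ε')
    (hBε : IsGreatest ((fun w => Metric.infDist w Ωstar) '' {w | F w = Fstar + ε}) Bε)
    (hBε' : IsGreatest ((fun w => Metric.infDist w Ωstar) '' {w | F w = Fstar + ε'}) Bε')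
    (hBpos : 0 < Bε) :
    Bε' / ε' ≤ Bε / ε :=
  stmt_1_general d F hF Ωstar hne hcomp Fstar hFstar ε ε' Bε Bε' hε hεε' hBε hBε'
end

section
/- Let F : K → ℝ be convex on a closed convex set K ⊆ ℝ^d with stochastic subgradients bounded by G. Fix w₁ ∈ K and β > 0, and consider iterates w_{t+1} = Π_K[w_t - η_t(g_t + (1/β)(w_t - w₁))] where ‖g_t‖ ≤ G and η_t = 2β/t. Then for every t ≥ 1, ‖w_t - w₁‖ ≤ 2βG. -/
/-! Relative to the anchor `w₁`, a step with `η ≤ β` maps `x - w₁` to `(1 - η/β)(x - w₁) - η g`,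
a convex-type combination that keeps the ball of radius `2βG` about `w₁` invariant, and projecting
onto `K ∋ w₁` does not increase the distance to `w₁`. Only the first step has `η = 2β > β`, but it
starts at `w₁` itself and so moves by just `2β ‖g₁‖ ≤ 2βG`. -/

section AnchoredStep

variable {E : Type*} [NormedAddCommGroup E] [NormedSpace ℝ E]

noncomputable def anchoredStep (β : ℝ) (w₁ : E) (η : ℝ) (g x : E) : E :=
  x - η • (g + (1 / β) • (x - w₁))

variable {β η G : ℝ} {w₁ g x : E}

theorem anchoredStep_sub_anchor :
    anchoredStep β w₁ η g x - w₁ = (1 - η / β) • (x - w₁) - η • g := by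
  rw [anchoredStep, div_eq_mul_inv η β]
  module

theorem norm_anchoredStep_anchor_sub_anchor_le (hη : 0 ≤ η) (hg : ‖g‖ ≤ G) :
    ‖anchoredStep β w₁ η g w₁ - w₁‖ ≤ η * G := by
  simp only [anchoredStep, sub_self, smul_zero, add_zero, sub_sub_cancel_left, norm_neg,
    norm_smul, Real.norm_of_nonneg hη]
  exact mul_le_mul_of_nonneg_left hg hη

theorem norm_anchoredStep_sub_anchor_le (hβ : 0 < β) (hη : 0 ≤ η) (hηβ : η ≤ β)
    (hx : ‖x - w₁‖ ≤ 2 * β * G) (hg : ‖g‖ ≤ G) :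
    ‖anchoredStep β w₁ η g x - w₁‖ ≤ 2 * β * G := by
  have hG : 0 ≤ G := (norm_nonneg g).trans hg
  have hcoef : 0 ≤ 1 - η / β := sub_nonneg.2 ((div_le_one hβ).2 hηβ)
  calc ‖anchoredStep β w₁ η g x - w₁‖
      ≤ ‖(1 - η / β) • (x - w₁)‖ + ‖η • g‖ := by
        rw [anchoredStep_sub_anchor]
        exact norm_sub_le _ _
    _ = (1 - η / β) * ‖x - w₁‖ + η * ‖g‖ := by
        rw [norm_smul, norm_smul, Real.norm_of_nonneg hcoef, Real.norm_of_nonneg hη]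
    _ ≤ (1 - η / β) * (2 * β * G) + η * G := by gcongr
    _ = 2 * β * G - η * G := by field_simp; ring
    _ ≤ 2 * β * G := sub_le_self _ (mul_nonneg hη hG)

end AnchoredStep

theorem stmt_3_general (d : ℕ) (K : Set (EuclideanSpace ℝ (Fin d)))
    (β G : ℝ) (hβ : 0 < β) (hG : 0 ≤ G)
    (w₁ : EuclideanSpace ℝ (Fin d)) (hw₁ : w₁ ∈ K)
    (g w : ℕ → EuclideanSpace ℝ (Fin d))
    (hg : ∀ t, ‖g t‖ ≤ G)
    (hw1 : w 1 = w₁)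
    (hupdate : ∀ t, 1 ≤ t →
      w (t+1) ∈ K ∧
      ∀ u ∈ K, ‖w (t+1) - u‖ ≤
        ‖(w t - (2*β/(t:ℝ)) • (g t + (1/β) • (w t - w₁))) - u‖) :
    ∀ t, 1 ≤ t → ‖w t - w₁‖ ≤ 2 * β * G := by
  intro t ht
  induction t, ht using Nat.le_induction with
  | base => simpa [hw1] using mul_nonneg (by positivity : (0 : ℝ) ≤ 2 * β) hG
  | succ t ht ih =>
    have hη : 0 ≤ 2 * β / (t : ℝ) := by positivity
    refine ((hupdate t ht).2 w₁ hw₁).trans ?_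
    change ‖anchoredStep β w₁ (2 * β / t) (g t) (w t) - w₁‖ ≤ 2 * β * G
    rcases ht.eq_or_lt with rfl | ht2
    · simpa [hw1] using norm_anchoredStep_anchor_sub_anchor_le hη (hg 1)
    · have hηβ : 2 * β / (t : ℝ) ≤ β := by
        rw [div_le_iff₀ (by positivity)]
        nlinarith [(Nat.ofNat_le_cast (α := ℝ)).2 ht2]
      exact norm_anchoredStep_sub_anchor_le hβ hη hηβ ih (hg t)

theorem stmt_3 (d : ℕ) (K : Set (EuclideanSpace ℝ (Fin d)))
    (hK : Convex ℝ K) (hKc : IsClosed K)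
    (β G : ℝ) (hβ : 0 < β) (hG : 0 ≤ G)
    (w₁ : EuclideanSpace ℝ (Fin d)) (hw₁ : w₁ ∈ K)
    (g w : ℕ → EuclideanSpace ℝ (Fin d))
    (hg : ∀ t, ‖g t‖ ≤ G)
    (hw1 : w 1 = w₁)
    (hupdate : ∀ t, 1 ≤ t →
      w (t+1) ∈ K ∧
      ∀ u ∈ K, ‖w (t+1) - u‖ ≤
        ‖(w t - (2*β/(t:ℝ)) • (g t + (1/β) • (w t - w₁))) - u‖) :
    ∀ t, 1 ≤ t → ‖w t - w₁‖ ≤ 2 * β * G :=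
  stmt_3_general d K β G hβ hG w₁ hw₁ g w hg hw1 hupdate
end

section
/- Suppose F : ℝ^d → ℝ is given by F(w) = max_j (aⱼᵀw + bⱼ) for finitely many affine functions, with nonempty compact optimal set K_* and optimal value F_*. Then there exists a constant c > 0 such that for all w in any fixed bounded set S containing K_*, dist(w, K_*) ≤ c(F(w) - F_*). -/
open Finset RealInnerProductSpace

section Hoffman

theorem cara_aux {ι : Type*} [Fintype ι] {E : Type*} [AddCommGroup E] [Module ℝ E]
    (a : ι → E) (n : ℕ) :
    ∀ lam : ι → ℝ, (∀ i, 0 ≤ lam i) →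
      (Finset.univ.filter (fun i => lam i ≠ 0)).card ≤ n →
      ∃ mu : ι → ℝ, (∀ i, 0 ≤ mu i) ∧ (∀ i, lam i = 0 → mu i = 0) ∧
        (∑ i, mu i • a i = ∑ i, lam i • a i) ∧
        LinearIndependent ℝ (fun i : {i // mu i ≠ 0} => a i) := by
  classical
  induction n with
  | zero =>
    intro lam hlam hcard
    have hz : ∀ i, lam i = 0 := by
      intro i
      by_contra h
      have : (Finset.univ.filter (fun i => lam i ≠ 0)).Nonempty := ⟨i, by simp [h]⟩
      have := Finset.card_pos.mpr this
      omega
    refine ⟨lam, hlam, fun i _ => hz i, rfl, ?_⟩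
    have : IsEmpty {i // lam i ≠ 0} := ⟨fun ⟨i, hi⟩ => hi (hz i)⟩
    exact linearIndependent_empty_type
  | succ n ih =>
    intro lam hlam hcard
    by_cases hli : LinearIndependent ℝ (fun i : {i // lam i ≠ 0} => a i)
    · exact ⟨lam, hlam, fun i h => h, rfl, hli⟩
    · obtain ⟨g0, hg0sum, i00, hg0i0⟩ := Fintype.not_linearIndependent_iff.mp hli
      obtain ⟨g, hgsum, i0, hgi0⟩ :
          ∃ g : {i // lam i ≠ 0} → ℝ, (∑ i, g i • a i.1 = 0) ∧ ∃ i0, 0 < g i0 := by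
        rcases lt_or_gt_of_ne hg0i0 with h | h
        · refine ⟨-g0, ?_, i00, by simpa using h⟩
          simp only [Pi.neg_apply, neg_smul, Finset.sum_neg_distrib, hg0sum, neg_zero]
        · exact ⟨g0, hg0sum, i00, h⟩
      -- extend g to ι by zero
      set G : ι → ℝ := fun i => if h : lam i ≠ 0 then g ⟨i, h⟩ else 0 with hG
      have hGsub : ∀ i (h : lam i ≠ 0), G i = g ⟨i, h⟩ := by
        intro i h; simp [hG, h]
      have hGzero : ∀ i, lam i = 0 → G i = 0 := by
        intro i h; simp [hG, h]
      have hGsum : ∑ i, G i • a i = 0 := by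
        have h1 : ∑ i, G i • a i = ∑ i ∈ Finset.univ.filter (fun i => lam i ≠ 0), G i • a i := by
          refine (Finset.sum_filter_of_ne ?_).symm
          intro i _ hne
          by_contra h
          exact hne (by rw [hGzero i h, zero_smul])
        have h2 : ∑ i ∈ Finset.univ.filter (fun i => lam i ≠ 0), G i • a i
            = ∑ i : {i // lam i ≠ 0}, G i.1 • a i.1 :=
          Finset.sum_subtype _ (by simp) _
        rw [h1, h2, ← hgsum]
        refine Finset.sum_congr rfl ?_
        rintro ⟨i, h⟩ _
        rw [hGsub i h]
      -- the pivot
      have hT : (Finset.univ.filter (fun i => 0 < G i)).Nonempty :=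
        ⟨i0.1, by simp [hGsub i0.1 i0.2, hgi0]⟩
      set T := Finset.univ.filter (fun i => 0 < G i) with hTdef
      obtain ⟨j0, hj0T, hj0⟩ := Finset.exists_mem_eq_inf' hT (fun i => lam i / G i)
      set τ := T.inf' hT (fun i => lam i / G i) with hτdef
      have hGj0 : 0 < G j0 := by simpa [hTdef] using hj0T
      have hlamj0 : lam j0 ≠ 0 := by
        intro h; rw [hGzero j0 h] at hGj0; exact lt_irrefl _ hGj0
      have hτ0 : 0 ≤ τ := by
        rw [hj0]; exact div_nonneg (hlam j0) hGj0.le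
      set mu : ι → ℝ := fun i => lam i - τ * G i with hmu
      have hmupos : ∀ i, 0 ≤ mu i := by
        intro i
        rcases le_or_gt (G i) 0 with h | h
        · have : τ * G i ≤ 0 := mul_nonpos_of_nonneg_of_nonpos hτ0 h
          simp only [hmu]; linarith [hlam i]
        · have hiT : i ∈ T := by simp [hTdef, h]
          have hle : τ ≤ lam i / G i := Finset.inf'_le _ hiT
          have h2 : τ * G i ≤ (lam i / G i) * G i := mul_le_mul_of_nonneg_right hle h.le
          rw [div_mul_cancel₀ _ h.ne'] at h2
          simp only [hmu]; linarith
      have hmusum : ∑ i, mu i • a i = ∑ i, lam i • a i := by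
        simp only [hmu, sub_smul, smul_smul, Finset.sum_sub_distrib]
        have : ∑ i, (τ * G i) • a i = τ • ∑ i, G i • a i := by
          rw [Finset.smul_sum]
          refine Finset.sum_congr rfl fun i _ => ?_
          rw [smul_smul]
        rw [this, hGsum, smul_zero, sub_zero]
      have hmuzero : ∀ i, lam i = 0 → mu i = 0 := by
        intro i h
        simp only [hmu, hGzero i h, h, mul_zero, sub_zero]
      have hmuj0 : mu j0 = 0 := by
        simp only [hmu]
        have hiv : τ = lam j0 / G j0 := hτdef.trans hj0
        rw [hiv, div_mul_cancel₀ _ hGj0.ne', sub_self]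
      have hcard' : (Finset.univ.filter (fun i => mu i ≠ 0)).card ≤ n := by
        have hsub : Finset.univ.filter (fun i => mu i ≠ 0) ⊆
            (Finset.univ.filter (fun i => lam i ≠ 0)).erase j0 := by
          intro i hi
          simp only [Finset.mem_filter, Finset.mem_univ, true_and] at hi
          refine Finset.mem_erase.mpr ⟨?_, ?_⟩
          · intro h; rw [h] at hi; exact hi hmuj0
          · simp only [Finset.mem_filter, Finset.mem_univ, true_and]
            intro h; exact hi (hmuzero i h)
        have h1 := Finset.card_le_card hsub
        have h2 : j0 ∈ Finset.univ.filter (fun i => lam i ≠ 0) := by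
          simp [hlamj0]
        have h3 := Finset.card_erase_of_mem h2
        omega
      obtain ⟨mu', h1, h2, h3, h4⟩ := ih mu hmupos hcard'
      exact ⟨mu', h1, fun i h => h2 i (hmuzero i h), h3.trans hmusum, h4⟩

theorem cara {ι : Type*} [Fintype ι] {E : Type*} [AddCommGroup E] [Module ℝ E]
    (a : ι → E) (lam : ι → ℝ) (hlam : ∀ i, 0 ≤ lam i) :
    ∃ mu : ι → ℝ, (∀ i, 0 ≤ mu i) ∧ (∀ i, lam i = 0 → mu i = 0) ∧
      (∑ i, mu i • a i = ∑ i, lam i • a i) ∧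
      LinearIndependent ℝ (fun i : {i // mu i ≠ 0} => a i) :=
  cara_aux a _ lam hlam le_rfl

theorem indep_bound {ι : Type*} [Fintype ι] {E : Type*} [NormedAddCommGroup E]
    [NormedSpace ℝ E] [FiniteDimensional ℝ E] (a : ι → E) (I : Finset ι)
    (h : LinearIndependent ℝ (fun i : I => a i)) :
    ∃ C > 0, ∀ lam : ι → ℝ, (∀ i ∉ I, lam i = 0) →
      ∑ i, lam i ≤ C * ‖∑ i, lam i • a i‖ := by
  classical
  -- the linear map from coefficients to vectors
  let f : (I → ℝ) →ₗ[ℝ] E :=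
    { toFun := fun c => ∑ i : I, c i • a i.1
      map_add' := by
        intro x y
        simp [add_smul, Finset.sum_add_distrib]
      map_smul' := by
        intro r x
        simp [smul_smul, Finset.smul_sum] }
  have hinj : LinearMap.ker f = ⊥ := by
    rw [LinearMap.ker_eq_bot']
    intro c hc
    exact funext (Fintype.linearIndependent_iff.mp h c hc)
  let e : (I → ℝ) ≃ₗ[ℝ] LinearMap.range f := LinearEquiv.ofInjective f (LinearMap.ker_eq_bot.mp hinj)
  let Tc : (LinearMap.range f) →L[ℝ] (I → ℝ) := LinearMap.toContinuousLinearMap e.symm.toLinearMap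
  refine ⟨(I.card : ℝ) * ‖Tc‖ + 1, by positivity, ?_⟩
  intro lam hsupp
  set x := ∑ i, lam i • a i with hx
  set c : I → ℝ := fun i => lam i.1 with hc
  have hfc : f c = x := by
    show ∑ i : I, lam i.1 • a i.1 = x
    rw [hx, Finset.sum_coe_sort I (fun i => lam i • a i)]
    refine Finset.sum_subset (Finset.subset_univ I) ?_
    intro i _ hi
    rw [hsupp i hi, zero_smul]
  have hxmem : x ∈ LinearMap.range f := ⟨c, hfc⟩
  have hTcx : Tc ⟨x, hxmem⟩ = c := by
    have : (⟨x, hxmem⟩ : LinearMap.range f) = e c := by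
      apply Subtype.ext
      simp [e, LinearEquiv.ofInjective_apply, hfc]
    rw [this]
    show e.symm (e c) = c
    exact e.symm_apply_apply c
  have hnorm : ‖c‖ ≤ ‖Tc‖ * ‖x‖ := by
    have := Tc.le_opNorm ⟨x, hxmem⟩
    rwa [hTcx] at this
  have hsum : ∑ i, lam i = ∑ i : I, c i := by
    rw [Finset.sum_coe_sort I (fun i => lam i)]
    refine (Finset.sum_subset (Finset.subset_univ I) ?_).symm
    intro i _ hi
    exact hsupp i hi
  have hbound : ∑ i : I, c i ≤ (I.card : ℝ) * ‖c‖ := by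
    calc ∑ i : I, c i ≤ ∑ i : I, ‖c‖ := by
          refine Finset.sum_le_sum fun i _ => ?_
          calc c i ≤ |c i| := le_abs_self _
            _ = ‖c i‖ := (Real.norm_eq_abs _).symm
            _ ≤ ‖c‖ := norm_le_pi_norm c i
      _ = (Fintype.card I : ℝ) * ‖c‖ := by rw [Finset.sum_const, nsmul_eq_mul]; simp
      _ = (I.card : ℝ) * ‖c‖ := by rw [Fintype.card_coe]
  have hxnn : (0:ℝ) ≤ ‖x‖ := norm_nonneg _
  calc ∑ i, lam i = ∑ i : I, c i := hsum
    _ ≤ (I.card : ℝ) * ‖c‖ := hbound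
    _ ≤ (I.card : ℝ) * (‖Tc‖ * ‖x‖) := by
        refine mul_le_mul_of_nonneg_left hnorm (by positivity)
    _ = ((I.card : ℝ) * ‖Tc‖) * ‖x‖ := by ring
    _ ≤ ((I.card : ℝ) * ‖Tc‖ + 1) * ‖x‖ := by nlinarith

/-- The conic hull of a finite family is closed. -/
theorem cone_isClosed {ι : Type*} [Fintype ι] {E : Type*} [NormedAddCommGroup E]
    [NormedSpace ℝ E] [FiniteDimensional ℝ E] (a : ι → E) :
    IsClosed {x : E | ∃ lam : ι → ℝ, (∀ i, 0 ≤ lam i) ∧ x = ∑ i, lam i • a i} := by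
  classical
  -- for each finset I, the piece of the cone supported on I (when independent)
  set T : Finset ι → Set E := fun I =>
    {x : E | ∃ lam : ι → ℝ, (∀ i, 0 ≤ lam i) ∧ (∀ i ∉ I, lam i = 0) ∧ x = ∑ i, lam i • a i}
    with hT
  have hTclosed : ∀ I : Finset ι, LinearIndependent ℝ (fun i : I => a i) → IsClosed (T I) := by
    intro I hI
    let f : (I → ℝ) →ₗ[ℝ] E :=
      { toFun := fun c => ∑ i : I, c i • a i.1
        map_add' := by
          intro x y
          simp [add_smul, Finset.sum_add_distrib]
        map_smul' := by
          intro r x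
          simp [smul_smul, Finset.smul_sum] }
    have hinj : LinearMap.ker f = ⊥ := by
      rw [LinearMap.ker_eq_bot']
      intro c hc
      exact funext (Fintype.linearIndependent_iff.mp hI c hc)
    have hemb : Topology.IsClosedEmbedding f := LinearMap.isClosedEmbedding_of_injective hinj
    have himg : T I = f '' {c : I → ℝ | ∀ i, 0 ≤ c i} := by
      ext x
      constructor
      · rintro ⟨lam, hpos, hsupp, rfl⟩
        refine ⟨fun i => lam i.1, fun i => hpos i.1, ?_⟩
        show ∑ i : I, lam i.1 • a i.1 = ∑ i, lam i • a i
        rw [Finset.sum_coe_sort I (fun i => lam i • a i)]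
        refine Finset.sum_subset (Finset.subset_univ I) ?_
        intro i _ hi
        rw [hsupp i hi, zero_smul]
      · rintro ⟨c, hc, rfl⟩
        refine ⟨fun i => if h : i ∈ I then c ⟨i, h⟩ else 0, ?_, ?_, ?_⟩
        · intro i
          by_cases h : i ∈ I
          · simp only [dif_pos h]; exact hc ⟨i, h⟩
          · simp [h]
        · intro i hi; simp [hi]
        · show f c = ∑ i, (if h : i ∈ I then c ⟨i, h⟩ else 0) • a i
          show ∑ i : I, c i • a i.1 = _
          rw [← Finset.sum_subset (Finset.subset_univ I)
            (f := fun i => (if h : i ∈ I then c ⟨i, h⟩ else 0) • a i)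
            (by intro i _ hi; simp [hi])]
          rw [← Finset.sum_coe_sort I (fun i => (if h : i ∈ I then c ⟨i, h⟩ else 0) • a i)]
          refine Finset.sum_congr rfl ?_
          rintro ⟨i, hi⟩ _
          simp [hi]
    rw [himg]
    refine hemb.isClosedMap _ ?_
    have : {c : I → ℝ | ∀ i, 0 ≤ c i} = ⋂ i : I, {c : I → ℝ | 0 ≤ c i} := by
      ext c; simp [Set.mem_iInter]
    rw [this]
    exact isClosed_iInter (fun i => isClosed_le continuous_const (continuous_apply i))
  -- the cone is the finite union of the independent pieces, plus {0}
  have hdecomp : {x : E | ∃ lam : ι → ℝ, (∀ i, 0 ≤ lam i) ∧ x = ∑ i, lam i • a i}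
      = ⋃ I : Finset ι, (if LinearIndependent ℝ (fun i : I => a i) then T I else {0}) := by
    ext x
    simp only [Set.mem_iUnion, Set.mem_setOf_eq]
    constructor
    · rintro ⟨lam, hpos, rfl⟩
      obtain ⟨mu, hmupos, hmusupp, hmusum, hmuind⟩ := cara a lam hpos
      set I : Finset ι := Finset.univ.filter (fun i => mu i ≠ 0) with hI'
      have hind : LinearIndependent ℝ (fun i : I => a i) := by
        refine (linearIndependent_equiv' (Equiv.subtypeEquivRight ?_) rfl).mp hmuind
        intro i; simp [hI']
      refine ⟨I, ?_⟩
      rw [if_pos hind]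
      exact ⟨mu, hmupos, by intro i hi; by_contra h; exact hi (by simp [hI', h]), hmusum.symm⟩
    · rintro ⟨I, hx⟩
      by_cases hind : LinearIndependent ℝ (fun i : I => a i)
      · rw [if_pos hind] at hx
        obtain ⟨lam, hpos, _, rfl⟩ := hx
        exact ⟨lam, hpos, rfl⟩
      · rw [if_neg hind] at hx
        refine ⟨0, fun i => le_rfl, ?_⟩
        simp only [Set.mem_singleton_iff] at hx
        simp [hx]
  rw [hdecomp]
  refine isClosed_iUnion_of_finite ?_
  intro I
  by_cases hind : LinearIndependent ℝ (fun i : I => a i)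
  · rw [if_pos hind]; exact hTclosed I hind
  · rw [if_neg hind]; exact isClosed_singleton

theorem farkas {ι : Type*} [Fintype ι] [Nonempty ι] {E : Type*} [NormedAddCommGroup E]
    [InnerProductSpace ℝ E] [FiniteDimensional ℝ E]
    (a : ι → E) (c : ι → ℝ) (K : Set E)
    (hK : K = {x : E | ∀ i, ⟪a i, x⟫ + c i ≤ 0})
    (p : E) (hp : p ∈ K) (v : E) (hnormal : ∀ q ∈ K, ⟪v, q - p⟫ ≤ 0) :
    ∃ lam : ι → ℝ, (∀ i, 0 ≤ lam i) ∧ (∀ i, ⟪a i, p⟫ + c i < 0 → lam i = 0) ∧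
      v = ∑ i, lam i • a i := by
  classical
  haveI : CompleteSpace E := FiniteDimensional.complete ℝ E
  set act : ι → Prop := fun i => ⟪a i, p⟫ + c i = 0 with hact
  set Cone : Set E :=
    {x : E | ∃ lam : Subtype act → ℝ, (∀ i, 0 ≤ lam i) ∧ x = ∑ i : Subtype act, lam i • a i.1}
    with hCone
  by_cases hv : v ∈ Cone
  · obtain ⟨lam, hpos, hsum⟩ := hv
    refine ⟨fun i => if h : act i then lam ⟨i, h⟩ else 0, ?_, ?_, ?_⟩
    · intro i
      by_cases h : act i
      · simp only [dif_pos h]; exact hpos ⟨i, h⟩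
      · simp [h]
    · intro i hi
      have : ¬ act i := by intro h; rw [hact] at h; simp only [h] at hi; exact lt_irrefl 0 hi
      simp [this]
    · rw [hsum]
      have h1 : ∑ i : ι, (if h : act i then lam ⟨i, h⟩ else 0) • a i
          = ∑ i ∈ Finset.univ.filter act, (if h : act i then lam ⟨i, h⟩ else 0) • a i := by
        refine (Finset.sum_filter_of_ne ?_).symm
        intro i _ hne
        by_contra h
        exact hne (by rw [dif_neg h, zero_smul])
      have h2 : ∑ i ∈ Finset.univ.filter act, (if h : act i then lam ⟨i, h⟩ else 0) • a i
          = ∑ i : Subtype act, (if h : act i.1 then lam ⟨i.1, h⟩ else 0) • a i.1 :=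
        Finset.sum_subtype _ (by intro x; simp only [Finset.mem_filter, Finset.mem_univ, true_and]; exact Iff.rfl) _
      rw [h1, h2]
      refine Finset.sum_congr rfl ?_
      rintro ⟨i, h⟩ _
      rw [dif_pos h]
  · exfalso
    -- separate v from the cone
    have hclosed : IsClosed Cone := cone_isClosed (fun i : Subtype act => a i.1)
    have hconv : Convex ℝ Cone := by
      rintro x ⟨lx, hlx, rfl⟩ y ⟨ly, hly, rfl⟩ s t hs ht hst
      refine ⟨fun i => s * lx i + t * ly i, ?_, ?_⟩
      · intro i; exact add_nonneg (mul_nonneg hs (hlx i)) (mul_nonneg ht (hly i))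
      · rw [Finset.smul_sum, Finset.smul_sum, ← Finset.sum_add_distrib]
        refine Finset.sum_congr rfl fun i _ => ?_
        rw [add_smul, smul_smul, smul_smul]
    obtain ⟨φ, u, hsep, hvu⟩ := geometric_hahn_banach_closed_point hconv hclosed hv
    have hzero : (0 : E) ∈ Cone := ⟨0, fun i => le_rfl, by simp⟩
    have hu0 : 0 < u := by have := hsep 0 hzero; simpa using this
    have hconemul : ∀ r : ℝ, 0 ≤ r → ∀ x ∈ Cone, r • x ∈ Cone := by
      rintro r hr x ⟨lam, hlam, rfl⟩
      refine ⟨fun i => r * lam i, fun i => mul_nonneg hr (hlam i), ?_⟩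
      rw [Finset.smul_sum]
      refine Finset.sum_congr rfl fun i _ => ?_
      rw [smul_smul]
    have hnonpos : ∀ x ∈ Cone, φ x ≤ 0 := by
      intro x hx
      by_contra hpos
      push_neg at hpos
      have hscale : ((u + 1) / φ x) • x ∈ Cone :=
        hconemul _ (div_nonneg (by linarith) hpos.le) x hx
      have := hsep _ hscale
      rw [map_smul, smul_eq_mul, div_mul_cancel₀ _ (ne_of_gt hpos)] at this
      linarith
    set uvec : E := (InnerProductSpace.toDual ℝ E).symm φ with huvec
    have hdual : ∀ x : E, ⟪uvec, x⟫ = φ x := fun x => InnerProductSpace.toDual_symm_apply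
    have hai : ∀ i : Subtype act, ⟪a i.1, uvec⟫ ≤ 0 := by
      intro i
      have hmem : a i.1 ∈ Cone := by
        refine ⟨fun j => if j = i then 1 else 0, ?_, ?_⟩
        · intro j; by_cases h : j = i <;> simp [h]
        · simp [ite_smul]
      rw [real_inner_comm, hdual]
      exact hnonpos _ hmem
    have hvpos : 0 < ⟪v, uvec⟫ := by
      rw [real_inner_comm, hdual]
      linarith
    -- choose a small step size
    set D : ι → ℝ := fun i => ‖a i‖ * ‖uvec‖ with hD
    have hD0 : ∀ i, 0 ≤ D i := fun i => mul_nonneg (norm_nonneg _) (norm_nonneg _)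
    set sfun : ι → ℝ := fun i =>
      if ⟪a i, p⟫ + c i < 0 then (-(⟪a i, p⟫ + c i)) / (D i + 1) else 1 with hsfun
    have hsfunpos : ∀ i, 0 < sfun i := by
      intro i
      simp only [hsfun]
      by_cases h : ⟪a i, p⟫ + c i < 0
      · rw [if_pos h]
        exact div_pos (by linarith) (by have := hD0 i; linarith)
      · rw [if_neg h]; exact one_pos
    set s : ℝ := Finset.univ.inf' Finset.univ_nonempty sfun with hs
    have hspos : 0 < s := by
      rw [hs, Finset.lt_inf'_iff]
      intro i _
      exact hsfunpos i
    have hqK : p + s • uvec ∈ K := by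
      rw [hK]
      intro i
      have hexp : ⟪a i, p + s • uvec⟫ = ⟪a i, p⟫ + s * ⟪a i, uvec⟫ := by
        rw [inner_add_right, real_inner_smul_right]
      rw [hexp]
      rcases lt_or_eq_of_le (by rw [hK] at hp; exact hp i) with hlt | heq
      · -- inactive constraint
        have hsle : s ≤ sfun i := Finset.inf'_le _ (Finset.mem_univ i)
        have hsi : sfun i = (-(⟪a i, p⟫ + c i)) / (D i + 1) := by
          simp only [hsfun]; rw [if_pos hlt]
        have hDi : ⟪a i, uvec⟫ ≤ D i := real_inner_le_norm _ _
        have h1 : s * ⟪a i, uvec⟫ ≤ s * D i := mul_le_mul_of_nonneg_left hDi hspos.le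
        have h2 : s * D i ≤ ((-(⟪a i, p⟫ + c i)) / (D i + 1)) * D i := by
          rw [← hsi]
          exact mul_le_mul_of_nonneg_right hsle (hD0 i)
        have h3 : ((-(⟪a i, p⟫ + c i)) / (D i + 1)) * (D i + 1) = -(⟪a i, p⟫ + c i) :=
          div_mul_cancel₀ _ (by have := hD0 i; linarith)
        have h4 : 0 ≤ (-(⟪a i, p⟫ + c i)) / (D i + 1) :=
          div_nonneg (by linarith) (by have := hD0 i; linarith)
        nlinarith [h1, h2, h3, h4]
      · -- active constraint
        have : ⟪a i, uvec⟫ ≤ 0 := hai ⟨i, heq⟩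
        nlinarith [this, hspos]
    have hcontra := hnormal _ hqK
    rw [add_sub_cancel_left, real_inner_smul_right] at hcontra
    nlinarith [hvpos, hspos, hcontra]

theorem sum_bound {ι : Type*} [Fintype ι] {E : Type*} [NormedAddCommGroup E]
    [NormedSpace ℝ E] [FiniteDimensional ℝ E] (a : ι → E) :
    ∃ C > 0, ∀ lam : ι → ℝ, (∀ i, 0 ≤ lam i) →
      ∃ mu : ι → ℝ, (∀ i, 0 ≤ mu i) ∧ (∀ i, lam i = 0 → mu i = 0) ∧
        (∑ i, mu i • a i = ∑ i, lam i • a i) ∧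
        ∑ i, mu i ≤ C * ‖∑ i, lam i • a i‖ := by
  classical
  have hch : ∀ I : Finset ι, ∃ C : ℝ, 0 < C ∧
      (LinearIndependent ℝ (fun i : I => a i) → ∀ lam : ι → ℝ, (∀ i ∉ I, lam i = 0) →
        ∑ i, lam i ≤ C * ‖∑ i, lam i • a i‖) := by
    intro I
    by_cases h : LinearIndependent ℝ (fun i : I => a i)
    · obtain ⟨C, hC, hb⟩ := indep_bound a I h
      exact ⟨C, hC, fun _ => hb⟩
    · exact ⟨1, one_pos, fun h' => absurd h' h⟩
  choose CC hCpos hCC using hch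
  refine ⟨Finset.univ.sup' ⟨∅, Finset.mem_univ _⟩ CC, ?_, ?_⟩
  · exact lt_of_lt_of_le (hCpos ∅) (Finset.le_sup' _ (Finset.mem_univ _))
  · intro lam hlam
    obtain ⟨mu, hmupos, hmusupp, hmusum, hmuind⟩ := cara a lam hlam
    set I : Finset ι := Finset.univ.filter (fun i => mu i ≠ 0) with hI
    have hind : LinearIndependent ℝ (fun i : I => a i) := by
      refine (linearIndependent_equiv' (Equiv.subtypeEquivRight ?_) rfl).mp hmuind
      intro i; simp [hI]
    have hsupp : ∀ i ∉ I, mu i = 0 := by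
      intro i hi; by_contra h; exact hi (by simp [hI, h])
    refine ⟨mu, hmupos, hmusupp, hmusum, ?_⟩
    calc ∑ i, mu i ≤ CC I * ‖∑ i, mu i • a i‖ := hCC I hind mu hsupp
      _ = CC I * ‖∑ i, lam i • a i‖ := by rw [hmusum]
      _ ≤ (Finset.univ.sup' ⟨∅, Finset.mem_univ _⟩ CC) * ‖∑ i, lam i • a i‖ :=
          mul_le_mul_of_nonneg_right (Finset.le_sup' _ (Finset.mem_univ _)) (norm_nonneg _)

end Hoffman

theorem stmt_9 (d m : ℕ) [Nonempty (Fin m)]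
    (a : Fin m → EuclideanSpace ℝ (Fin d)) (b : Fin m → ℝ)
    (F : EuclideanSpace ℝ (Fin d) → ℝ)
    (hFdef : ∀ w, F w = Finset.univ.sup' Finset.univ_nonempty (fun j => ⟪a j, w⟫ + b j))
    (Kstar : Set (EuclideanSpace ℝ (Fin d)))
    (hKstar : Kstar = {w | ∀ v, F w ≤ F v}) (hne : Kstar.Nonempty)
    (hcomp : IsCompact Kstar)
    (Fstar : ℝ) (hFstar : ∀ w ∈ Kstar, F w = Fstar)
    (S : Set (EuclideanSpace ℝ (Fin d))) (hS : Bornology.IsBounded S)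
    (hKS : Kstar ⊆ S) :
    ∃ c > 0, ∀ w ∈ S, Metric.infDist w Kstar ≤ c * (F w - Fstar) := by
  classical
  obtain ⟨w0, hw0⟩ := hne
  have hw0min : ∀ v, F w0 ≤ F v := by rw [hKstar] at hw0; exact hw0
  have hFw0 : F w0 = Fstar := hFstar w0 hw0
  have hmin : ∀ v, Fstar ≤ F v := fun v => hFw0 ▸ hw0min v
  set cc : Fin m → ℝ := fun i => b i - Fstar with hcc
  have KEq : Kstar = {x : EuclideanSpace ℝ (Fin d) | ∀ i, ⟪a i, x⟫ + cc i ≤ 0} := by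
    rw [hKstar]
    ext x
    simp only [Set.mem_setOf_eq]
    constructor
    · intro hx i
      have hFx : F x = Fstar := hFstar x (by rw [hKstar]; exact hx)
      have : ⟪a i, x⟫ + b i ≤ F x := by
        rw [hFdef x]
        exact Finset.le_sup' (fun j => ⟪a j, x⟫ + b j) (Finset.mem_univ i)
      rw [hFx] at this
      simp only [hcc]
      linarith
    · intro hx v
      have hFx : F x ≤ Fstar := by
        rw [hFdef x]
        refine Finset.sup'_le _ _ fun i _ => ?_
        have := hx i
        simp only [hcc] at this
        linarith
      exact le_trans (hFx.trans (hFw0 ▸ le_rfl)) (hw0min v)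
  have hconv : Convex ℝ Kstar := by
    rw [KEq]
    intro x hx y hy s t hs ht hst
    intro i
    have hxi := hx i
    have hyi := hy i
    have hlin : ⟪a i, s • x + t • y⟫ = s * ⟪a i, x⟫ + t * ⟪a i, y⟫ := by
      rw [inner_add_right, real_inner_smul_right, real_inner_smul_right]
    rw [hlin]
    have h1 : s * (⟪a i, x⟫ + cc i) ≤ 0 := mul_nonpos_of_nonneg_of_nonpos hs hxi
    have h2 : t * (⟪a i, y⟫ + cc i) ≤ 0 := mul_nonpos_of_nonneg_of_nonpos ht hyi
    have h3 : s * cc i + t * cc i = cc i := by rw [← add_mul, hst, one_mul]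
    nlinarith [h1, h2, h3]
  obtain ⟨C, hCpos, hC⟩ := sum_bound a
  refine ⟨C, hCpos, ?_⟩
  intro w hw
  have hFw : 0 ≤ F w - Fstar := by linarith [hmin w]
  by_cases hwK : w ∈ Kstar
  · rw [Metric.infDist_zero_of_mem hwK]
    positivity
  · -- projection
    obtain ⟨p, hpK, hpmin⟩ :=
      exists_norm_eq_iInf_of_complete_convex ⟨w0, hw0⟩ hcomp.isComplete hconv w
    have hdist : Metric.infDist w Kstar = ‖w - p‖ := by
      rw [Metric.infDist_eq_iInf]
      simp only [dist_eq_norm]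
      exact hpmin.symm
    have hnormal : ∀ q ∈ Kstar, ⟪w - p, q - p⟫ ≤ 0 :=
      (norm_eq_iInf_iff_real_inner_le_zero hconv hpK).mp hpmin
    have htpos : 0 < ‖w - p‖ := by
      rw [norm_pos_iff, sub_ne_zero]
      intro h
      exact hwK (h ▸ hpK)
    obtain ⟨lam, hlampos, hlamsupp, hlamsum⟩ := farkas a cc Kstar KEq p hpK (w - p) hnormal
    obtain ⟨mu, hmupos, hmusupp, hmusum, hmubound⟩ := hC lam hlampos
    rw [← hlamsum] at hmusum hmubound
    -- key computation
    have hsq : ‖w - p‖ ^ 2 = ∑ i, mu i * ⟪a i, w - p⟫ := by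
      rw [← real_inner_self_eq_norm_sq]
      nth_rewrite 1 [← hmusum]
      rw [sum_inner]
      refine Finset.sum_congr rfl fun i _ => ?_
      rw [real_inner_smul_left]
    have hterm : ∀ i, mu i * ⟪a i, w - p⟫ ≤ mu i * (F w - Fstar) := by
      intro i
      by_cases h : mu i = 0
      · simp [h]
      · have hlamne : lam i ≠ 0 := fun hl => h (hmusupp i hl)
        have hact : ⟪a i, p⟫ + cc i = 0 := by
          have hle : ⟪a i, p⟫ + cc i ≤ 0 := by rw [KEq] at hpK; exact hpK i
          rcases lt_or_eq_of_le hle with hlt | heq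
          · exact absurd (hlamsupp i hlt) hlamne
          · exact heq
        have hinner : ⟪a i, w - p⟫ = (⟪a i, w⟫ + cc i) - (⟪a i, p⟫ + cc i) := by
          rw [inner_sub_right]; ring
        have hFwi : ⟪a i, w⟫ + cc i ≤ F w - Fstar := by
          have : ⟪a i, w⟫ + b i ≤ F w := by
            rw [hFdef w]; exact Finset.le_sup' (fun j => ⟪a j, w⟫ + b j) (Finset.mem_univ i)
          simp only [hcc]; linarith
        have : ⟪a i, w - p⟫ ≤ F w - Fstar := by rw [hinner, hact, sub_zero]; exact hFwi
        exact mul_le_mul_of_nonneg_left this (hmupos i)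
    have hkey : ‖w - p‖ ^ 2 ≤ (∑ i, mu i) * (F w - Fstar) := by
      rw [hsq, Finset.sum_mul]
      exact Finset.sum_le_sum fun i _ => hterm i
    have hfinal : ‖w - p‖ ^ 2 ≤ C * ‖w - p‖ * (F w - Fstar) :=
      hkey.trans (mul_le_mul_of_nonneg_right hmubound hFw)
    rw [hdist]
    nlinarith [hfinal, htpos]
end

section
/- Let F be convex on a closed convex set K with optimal value F_* attained on a nonempty set K_*. Suppose F satisfies the local error bound dist(w, K_*) ≤ c(F(w) - F_*)^θ for all w in the ε-sublevel set S_ε, with θ ∈ (0,1] and c > 0. If a point w satisfies F(w) - F_* ≤ ε₁ + ε for some ε₁ > 0, then its projection w† onto S_ε satisfies ‖w† - w‖ ≤ c ε₁ / ε^{1-θ}. -/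
/-!
If `F w` exceeds the optimal value `m` by `Δ > ε`, then for every minimiser `u` the point of the
segment `[u, w]` at parameter `ε / Δ` from `u` lies in the sublevel set `S_ε`, by convexity. Comparing
the projection `w†` with these points and using the triangle inequality through `w†` gives
`ε ‖w† - w‖ ≤ (Δ - ε) dist(w†, K_*)`, and the local error bound at `w† ∈ S_ε` turns
`dist(w†, K_*)` into `c ε^θ`.
-/

open Metric

section

variable {E : Type*} [NormedAddCommGroup E] [NormedSpace ℝ E]
  {K : Set E} {F : E → ℝ} {m ε : ℝ} {w wd : E}

theorem ConvexOn.mul_norm_sub_le_of_isMinOn_sublevel (hF : ConvexOn ℝ K F) {u : E}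
    (hu : u ∈ K) (hFu : F u ≤ m) (hw : w ∈ K) (hε : 0 ≤ ε) (hεw : ε < F w - m)
    (hwd : IsMinOn (‖· - w‖) {x ∈ K | F x ≤ m + ε} wd) :
    ε * ‖wd - w‖ ≤ (F w - m - ε) * ‖u - wd‖ := by
  obtain ⟨b, hb⟩ : ∃ b, b * (F w - m) = ε := ⟨ε / (F w - m), div_mul_cancel₀ _ (by linarith)⟩
  have hb0 : 0 ≤ b := by nlinarith
  have hb1 : b ≤ 1 := by nlinarith
  have hv : (1 - b) • u + b • w ∈ {x ∈ K | F x ≤ m + ε} := by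
    refine ⟨hF.1 hu hw (by linarith) hb0 (by ring), ?_⟩
    calc F ((1 - b) • u + b • w) ≤ (1 - b) * F u + b * F w :=
          hF.2 hu hw (by linarith) hb0 (by ring)
      _ ≤ (1 - b) * m + b * F w := by gcongr
      _ = m + ε := by linear_combination hb
  have hproj : ‖wd - w‖ ≤ (1 - b) * (‖u - wd‖ + ‖wd - w‖) :=
    calc ‖wd - w‖ ≤ ‖(1 - b) • u + b • w - w‖ := hwd hv
      _ = (1 - b) * ‖u - w‖ := by
          rw [show (1 - b) • u + b • w - w = (1 - b) • (u - w) by module, norm_smul,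
            Real.norm_of_nonneg (by linarith)]
      _ ≤ (1 - b) * (‖u - wd‖ + ‖wd - w‖) := by
          gcongr
          exact norm_sub_le_norm_sub_add_norm_sub u wd w
  calc ε * ‖wd - w‖ = (F w - m) * (b * ‖wd - w‖) := by rw [← hb]; ring
    _ ≤ (F w - m) * ((1 - b) * ‖u - wd‖) :=
        mul_le_mul_of_nonneg_left (by linarith) (by linarith)
    _ = (F w - m - ε) * ‖u - wd‖ := by rw [← hb]; ring

theorem ConvexOn.norm_sub_le_of_isMinOn_sublevel (hF : ConvexOn ℝ K F) {Kstar : Set E}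
    (hne : Kstar.Nonempty) (hKstar : Kstar ⊆ {x ∈ K | F x ≤ m}) (hw : w ∈ K) (hε : 0 < ε)
    (hεw : ε < F w - m) (hwd : IsMinOn (‖· - w‖) {x ∈ K | F x ≤ m + ε} wd) :
    ‖wd - w‖ ≤ (F w - m - ε) / ε * infDist wd Kstar := by
  have hgap : 0 < F w - m - ε := by linarith
  have hinf : ε * ‖wd - w‖ / (F w - m - ε) ≤ infDist wd Kstar := (le_infDist hne).2 fun u hu => by
    rw [div_le_iff₀' hgap, dist_comm, dist_eq_norm]
    exact hF.mul_norm_sub_le_of_isMinOn_sublevel (hKstar hu).1 (hKstar hu).2 hw hε.le hεw hwd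
  rw [div_le_iff₀' hgap] at hinf
  rw [div_mul_eq_mul_div, le_div_iff₀' hε]
  linarith

end

theorem stmt_11_general (d : ℕ) (K : Set (EuclideanSpace ℝ (Fin d)))
    (F : EuclideanSpace ℝ (Fin d) → ℝ) (hF : ConvexOn ℝ K F)
    (Kstar : Set (EuclideanSpace ℝ (Fin d)))
    (hKstar : Kstar = {w ∈ K | ∀ v ∈ K, F w ≤ F v}) (hne : Kstar.Nonempty)
    (Fstar : ℝ) (hFstar : ∀ w ∈ Kstar, F w = Fstar)
    (ε : ℝ) (hε : 0 < ε)
    (Sε : Set (EuclideanSpace ℝ (Fin d))) (hSε : Sε = {w ∈ K | F w ≤ Fstar + ε})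
    (θ c : ℝ) (hθ : θ ∈ Set.Ioc (0:ℝ) 1) (hc : 0 < c)
    (hleb : ∀ v ∈ Sε, Metric.infDist v Kstar ≤ c * (F v - Fstar) ^ θ)
    (ε₁ : ℝ) (hε₁ : 0 < ε₁)
    (w : EuclideanSpace ℝ (Fin d)) (hw : w ∈ K) (hgap : F w - Fstar ≤ ε₁ + ε)
    (wd : EuclideanSpace ℝ (Fin d)) (hwd : wd ∈ Sε)
    (hproj : ∀ v ∈ Sε, ‖wd - w‖ ≤ ‖v - w‖) :
    ‖wd - w‖ ≤ c * ε₁ / ε ^ (1 - θ) := by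
  subst hSε
  rcases le_or_gt (F w - Fstar) ε with hwS | hwS
  · have hzero : ‖wd - w‖ ≤ 0 := by simpa using hproj w ⟨hw, by linarith⟩
    exact hzero.trans (by positivity)
  obtain ⟨u, hu⟩ := hne
  have hFwd : Fstar ≤ F wd := hFstar u hu ▸ (hKstar ▸ hu).2 wd hwd.1
  have hdist : infDist wd Kstar ≤ c * ε ^ θ := (hleb wd hwd).trans <|
    mul_le_mul_of_nonneg_left (Real.rpow_le_rpow (by linarith) (by linarith [hwd.2]) hθ.1.le) hc.le
  have hsub : Kstar ⊆ {x ∈ K | F x ≤ Fstar} := fun v hv => ⟨(hKstar ▸ hv).1, (hFstar v hv).le⟩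
  calc ‖wd - w‖ ≤ (F w - Fstar - ε) / ε * infDist wd Kstar :=
        hF.norm_sub_le_of_isMinOn_sublevel ⟨u, hu⟩ hsub hw hε hwS hproj
    _ ≤ ε₁ / ε * (c * ε ^ θ) :=
        mul_le_mul (by gcongr; linarith) hdist infDist_nonneg (by positivity)
    _ = c * ε₁ / ε ^ (1 - θ) := by rw [Real.rpow_sub hε, Real.rpow_one]; field_simp

theorem stmt_11 (d : ℕ) (K : Set (EuclideanSpace ℝ (Fin d)))
    (hK : Convex ℝ K) (hKc : IsClosed K)
    (F : EuclideanSpace ℝ (Fin d) → ℝ) (hF : ConvexOn ℝ K F)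
    (Kstar : Set (EuclideanSpace ℝ (Fin d)))
    (hKstar : Kstar = {w ∈ K | ∀ v ∈ K, F w ≤ F v}) (hne : Kstar.Nonempty)
    (Fstar : ℝ) (hFstar : ∀ w ∈ Kstar, F w = Fstar)
    (ε : ℝ) (hε : 0 < ε)
    (Sε : Set (EuclideanSpace ℝ (Fin d))) (hSε : Sε = {w ∈ K | F w ≤ Fstar + ε})
    (θ c : ℝ) (hθ : θ ∈ Set.Ioc (0:ℝ) 1) (hc : 0 < c)
    (hleb : ∀ v ∈ Sε, Metric.infDist v Kstar ≤ c * (F v - Fstar) ^ θ)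
    (ε₁ : ℝ) (hε₁ : 0 < ε₁)
    (w : EuclideanSpace ℝ (Fin d)) (hw : w ∈ K) (hgap : F w - Fstar ≤ ε₁ + ε)
    (wd : EuclideanSpace ℝ (Fin d)) (hwd : wd ∈ Sε)
    (hproj : ∀ v ∈ Sε, ‖wd - w‖ ≤ ‖v - w‖) :
    ‖wd - w‖ ≤ c * ε₁ / ε ^ (1 - θ) :=
  stmt_11_general d K F hF Kstar hKstar hne Fstar hFstar ε hε Sε hSε θ c hθ hc hleb ε₁ hε₁ w hw hgap
    wd hwd hproj
end
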